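/- Define ℓ⁰(x) := (1/(2π)) ∫_0^{2π} √(1 + sin²(x)/(1 − cos(u)cos(x))²) du for x ∈ (0,π). Then ℓ⁰(x) → 2 as x → 0⁺. -/

import Mathlib

/-!
With `k x u = sin x / (1 - cos u cos x)`, the integrand of `ellZero x` is `√(1 + k²)`.
After the substitution `r = cos x / (1 + sin x)`, `k x` is the Poisson kernel
`(1 - r²) / (1 - 2 r cos u + r²)`, so `∫₀^{2π} k x = 2π` exactly. Since
`√(1 + k²) = 1 + k - d(k)` with `0 ≤ d(k) ≤ 1` and `d(0) = 0`, this gives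
`ellZero x = 2 - (2π)⁻¹ ∫₀^{2π} d(k x u) du`. As `x → 0⁺`, `k x u → 0` for every `u ∉ 2πℤ`,
so the last integral tends to `0` by dominated convergence.
-/

open Real Filter

noncomputable def ellZero (x : ℝ) : ℝ :=
  (1 / (2 * π)) * ∫ u in (0 : ℝ)..(2 * π),
    Real.sqrt (1 + Real.sin x ^ 2 / (1 - Real.cos u * Real.cos x) ^ 2)

open Set Topology MeasureTheory

theorem integral_poissonKernel_ofReal {r : ℝ} (hr : |r| < 1) :
    ∫ θ in 0..2 * π, (1 - r ^ 2) / (1 - 2 * r * cos θ + r ^ 2) = 2 * π := by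
  have h := (InnerProductSpace.harmonicOnNhd_const (1 : ℝ)).circleAverage_poissonKernel_smul
    (c := 0) (R := 1) (w := (r : ℂ)) (by simpa using hr)
  have hkernel (θ : ℝ) : (poissonKernel 0 r • fun _ : ℂ ↦ (1 : ℝ)) (circleMap 0 1 θ)
      = (1 - r ^ 2) / (1 - 2 * r * cos θ + r ^ 2) := by
    have hnorm : ‖circleMap 0 1 θ - r‖ ^ 2 = 1 - 2 * r * cos θ + r ^ 2 := by
      rw [Complex.sq_norm, Complex.normSq_apply]
      simp [circleMap, Complex.exp_ofReal_mul_I_re, Complex.exp_ofReal_mul_I_im]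
      nlinarith [sin_sq_add_cos_sq θ]
    simp [poissonKernel, hnorm]
  rw [circleAverage_def, smul_eq_mul, inv_mul_eq_iff_eq_mul₀ (by positivity)] at h
  simpa only [hkernel, mul_one] using h

theorem one_sub_mul_cos_pos {a : ℝ} (ha : |a| < 1) (u : ℝ) : 0 < 1 - a * cos u := by
  have := (abs_mul a (cos u)).trans_le <|
    mul_le_of_le_one_right (abs_nonneg a) (abs_cos_le_one u)
  linarith [le_abs_self (a * cos u)]

theorem integral_inv_one_sub_mul_cos {a : ℝ} (ha : |a| < 1) :
    ∫ u in 0..2 * π, (1 - a * cos u)⁻¹ = 2 * π / √(1 - a ^ 2) := by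
  set b := √(1 - a ^ 2)
  have hb0 : 0 < b := sqrt_pos.2 (by nlinarith [sq_abs a, abs_nonneg a])
  have hb2 : b ^ 2 = 1 - a ^ 2 := sq_sqrt (by nlinarith [sq_abs a, abs_nonneg a])
  have hr : |a / (1 + b)| < 1 := by
    rw [abs_div, abs_of_pos (by linarith : 0 < 1 + b), div_lt_one (by linarith)]
    linarith
  have hkernel (u : ℝ) :
      (1 - (a / (1 + b)) ^ 2) / (1 - 2 * (a / (1 + b)) * cos u + (a / (1 + b)) ^ 2)
        = b * (1 - a * cos u)⁻¹ := by
    have := one_sub_mul_cos_pos ha u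
    field_simp
    have hden : (1 + b) * (1 + b - a * 2 * cos u) + a ^ 2 = 2 * (1 + b) * (1 - a * cos u) := by
      linear_combination hb2
    rw [hden, div_eq_iff (by positivity)]
    linear_combination (a * cos u - 1) * hb2
  rw [eq_div_iff hb0.ne', mul_comm, ← intervalIntegral.integral_const_mul]
  simp only [← hkernel]
  exact integral_poissonKernel_ofReal hr

theorem abs_cos_lt_one_of_mem_Ioo {x : ℝ} (hx : x ∈ Ioo 0 π) : |cos x| < 1 := by
  rw [← sq_lt_one_iff_abs_lt_one, cos_sq']
  linarith [pow_pos (sin_pos_of_pos_of_lt_pi hx.1 hx.2) 2]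

theorem abs_one_add_sub_sqrt_one_add_sq_le_one {t : ℝ} (ht : 0 ≤ t) :
    |1 + t - √(1 + t ^ 2)| ≤ 1 := by
  have hle : √(1 + t ^ 2) ≤ 1 + t := (sqrt_le_left (by linarith)).2 (by nlinarith)
  have hge : t ≤ √(1 + t ^ 2) := (le_abs_self t).trans (abs_le_sqrt (by linarith))
  rw [abs_le]
  constructor <;> linarith

noncomputable def ellZeroKernel (x u : ℝ) : ℝ := sin x / (1 - cos u * cos x)

theorem continuous_ellZeroKernel {x : ℝ} (hx : x ∈ Ioo 0 π) : Continuous (ellZeroKernel x) := by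
  refine continuous_const.div (by fun_prop) fun u ↦ ?_
  rw [mul_comm]
  exact (one_sub_mul_cos_pos (abs_cos_lt_one_of_mem_Ioo hx) u).ne'

theorem ellZeroKernel_nonneg {x : ℝ} (hx : x ∈ Ioo 0 π) (u : ℝ) : 0 ≤ ellZeroKernel x u := by
  rw [ellZeroKernel, mul_comm]
  exact div_nonneg (sin_nonneg_of_nonneg_of_le_pi hx.1.le hx.2.le)
    (one_sub_mul_cos_pos (abs_cos_lt_one_of_mem_Ioo hx) u).le

theorem integral_ellZeroKernel {x : ℝ} (hx : x ∈ Ioo 0 π) :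
    ∫ u in 0..2 * π, ellZeroKernel x u = 2 * π := by
  have hsin : 0 < sin x := sin_pos_of_pos_of_lt_pi hx.1 hx.2
  calc ∫ u in 0..2 * π, ellZeroKernel x u = sin x * ∫ u in 0..2 * π, (1 - cos x * cos u)⁻¹ := by
        simp only [ellZeroKernel, div_eq_mul_inv, mul_comm (cos _) (cos x)]
        exact intervalIntegral.integral_const_mul _ _
    _ = sin x * (2 * π / sin x) := by
        rw [integral_inv_one_sub_mul_cos (abs_cos_lt_one_of_mem_Ioo hx),
          ← sin_eq_sqrt_one_sub_cos_sq hx.1.le hx.2.le]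
    _ = 2 * π := by field_simp

theorem tendsto_ellZeroKernel {u : ℝ} (hu : cos u ≠ 1) :
    Tendsto (ellZeroKernel · u) (𝓝 0) (𝓝 0) := by
  have h : ContinuousAt (ellZeroKernel · u) 0 :=
    continuous_sin.continuousAt.div (by fun_prop) (by simpa [sub_eq_zero] using hu.symm)
  simpa [ContinuousAt, ellZeroKernel] using h

theorem ellZero_eq_two_sub {x : ℝ} (hx : x ∈ Ioo 0 π) :
    ellZero x = 2 - (2 * π)⁻¹ *
      ∫ u in 0..2 * π, (1 + ellZeroKernel x u - √(1 + ellZeroKernel x u ^ 2)) := by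
  have hk := continuous_ellZeroKernel hx
  have hsum : Continuous fun u ↦ 1 + ellZeroKernel x u := by fun_prop
  have hsqrt : Continuous fun u ↦ √(1 + ellZeroKernel x u ^ 2) := by fun_prop
  have hell : ellZero x = (2 * π)⁻¹ * ∫ u in 0..2 * π, √(1 + ellZeroKernel x u ^ 2) := by
    simp only [ellZero, ellZeroKernel, div_pow, one_div]
  rw [hell, intervalIntegral.integral_sub (hsum.intervalIntegrable _ _)
      (hsqrt.intervalIntegrable _ _),
    intervalIntegral.integral_add intervalIntegrable_const (hk.intervalIntegrable _ _),
    integral_ellZeroKernel hx, intervalIntegral.integral_const, smul_eq_mul, mul_one, sub_zero]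
  field_simp
  ring

theorem tendsto_integral_one_add_ellZeroKernel_sub_sqrt :
    Tendsto (fun x ↦ ∫ u in 0..2 * π, (1 + ellZeroKernel x u - √(1 + ellZeroKernel x u ^ 2)))
      (𝓝[>] 0) (𝓝 0) := by
  have hdefect : Continuous fun t : ℝ ↦ 1 + t - √(1 + t ^ 2) := by fun_prop
  have hmem : ∀ᶠ x in 𝓝[>] (0 : ℝ), x ∈ Ioo 0 π := Ioo_mem_nhdsGT pi_pos
  have hlim : ∀ᵐ u, u ∈ uIoc 0 (2 * π) → Tendsto
      (fun x ↦ 1 + ellZeroKernel x u - √(1 + ellZeroKernel x u ^ 2)) (𝓝[>] 0) (𝓝 0) := by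
    filter_upwards [Measure.ae_ne volume (2 * π)] with u hu hu_mem
    rw [uIoc_of_le (by positivity)] at hu_mem
    have hcos : cos u ≠ 1 := by
      rw [Ne, cos_eq_one_iff_of_lt_of_lt (by linarith [hu_mem.1, pi_pos])
        (lt_of_le_of_ne hu_mem.2 hu)]
      exact hu_mem.1.ne'
    simpa [Function.comp_def] using
      (hdefect.tendsto 0).comp ((tendsto_ellZeroKernel hcos).mono_left nhdsWithin_le_nhds)
  simpa using intervalIntegral.tendsto_integral_filter_of_dominated_convergence (fun _ ↦ 1)
    (hmem.mono fun x hx ↦ (hdefect.comp (continuous_ellZeroKernel hx)).aestronglyMeasurable)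
    (hmem.mono fun x hx ↦ ae_of_all _ fun u _ ↦
      abs_one_add_sub_sqrt_one_add_sq_le_one (ellZeroKernel_nonneg hx u))
    intervalIntegrable_const hlim

theorem ellZero_tendsto_two :
    Filter.Tendsto ellZero (nhdsWithin 0 (Set.Ioi 0)) (nhds 2) := by
  have h := (tendsto_integral_one_add_ellZeroKernel_sub_sqrt.const_mul (2 * π)⁻¹).const_sub 2
  rw [mul_zero, sub_zero] at h
  refine h.congr' ?_
  filter_upwards [Ioo_mem_nhdsGT pi_pos] with x hx
  exact (ellZero_eq_two_sub hx).symm
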